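/- arXiv:2107.02269 — 2 statements merged into one kernel-verified Lean document; each statement's English description precedes it below -/
import Mathlib

section
/- Let F ∈ C²((-1,1)) with F'' ≥ c₀ > 0, and let F_ε be its cubic extension as above. Then there exist constants k₁ > 0 and k₂ ≥ 0, independent of ε ∈ (0,1], such that F_ε(s) ≥ k₁|s|³ - k₂ for all s ∈ ℝ. -/
/-- The cubic-growth extension `F_ε` of a singular potential `F : (-1,1) → ℝ`. -/
noncomputable def cubicExt (F : ℝ → ℝ) (ε : ℝ) (s : ℝ) : ℝ :=
  if 1 - ε ≤ s then
    F (1 - ε) + deriv F (1 - ε) * (s - (1 - ε))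
      + 1 / 2 * deriv (deriv F) (1 - ε) * (s - (1 - ε)) ^ 2
      + (s - (1 - ε)) ^ 3
  else if s ≤ -1 + ε then
    F (-1 + ε) + deriv F (-1 + ε) * (s - (-1 + ε))
      + 1 / 2 * deriv (deriv F) (-1 + ε) * (s - (-1 + ε)) ^ 2
      + |s - (-1 + ε)| ^ 3
  else F s

/-!
On `(-1,1)` the convex function `F` lies above its tangent at `0`, so `F ≥ F 0 - |F'(0)|` there.
On the right tail, with `a = 1 - ε` and `t = s - a ≥ 0`, the value of `F_ε` at `s` is
`F a + F'(a) t + ½ F''(a) t² + t³`, where `F a ≥ F 0 - |F'(0)|`, `F'(a) ≥ F'(0)` since `F'` is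
monotone and `a ≥ 0`, and `F''(a) ≥ 0`; the cube absorbs the linear term, leaving `t³/2` up to
a constant that does not depend on `ε`. Finally `|s| ≤ 1 + t`, so `|s|³ ≤ 4 (1 + t³)`.
The left tail is symmetric.
-/

open Set

lemma ConvexOn.add_deriv_mul_sub_le {S : Set ℝ} {f : ℝ → ℝ} {x y : ℝ} (hf : ConvexOn ℝ S f)
    (hx : x ∈ S) (hy : y ∈ S) (hfd : DifferentiableAt ℝ f x) :
    f x + deriv f x * (y - x) ≤ f y := by
  rcases lt_trichotomy x y with hxy | rfl | hyx
  · have h := hf.deriv_le_slope hx hy hxy hfd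
    rw [slope_def_field, le_div_iff₀ (sub_pos.2 hxy)] at h
    linarith
  · simp
  · have h := hf.slope_le_deriv hy hx hyx hfd
    rw [slope_def_field, div_le_iff₀ (sub_pos.2 hyx)] at h
    linarith

lemma half_cube_sub_le_cubic {A d q t : ℝ} (hA : 0 ≤ A) (hd : -A ≤ d) (hq : 0 ≤ q)
    (ht : 0 ≤ t) : t ^ 3 / 2 - A - A ^ 2 ≤ d * t + q * t ^ 2 + t ^ 3 := by
  -- If `t > 1 + A` then `t² > 2A`, so `t³/2` dominates `A t`.
  have hAt : A * t ≤ t ^ 3 / 2 + A + A ^ 2 := by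
    rcases le_or_gt t (1 + A) with h | h
    · nlinarith [pow_nonneg ht 3]
    · nlinarith [mul_nonneg ht ht, mul_nonneg (mul_nonneg ht ht) ht]
  nlinarith [mul_le_mul_of_nonneg_right hd ht, mul_nonneg hq (sq_nonneg t)]

theorem exists_le_cubicExt {F : ℝ → ℝ} (hconv : ConvexOn ℝ (Ioo (-1) 1) F)
    (hdiff : ∀ x ∈ Ioo (-1 : ℝ) 1, DifferentiableAt ℝ F x)
    (hF'' : ∀ x ∈ Ioo (-1 : ℝ) 1, 0 ≤ deriv (deriv F) x) {ε : ℝ} (hε : ε ∈ Ioc 0 1) (s : ℝ) :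
    ∃ t ≥ 0, |s| ≤ 1 + t ∧
      F 0 - 2 * |deriv F 0| - |deriv F 0| ^ 2 + t ^ 3 / 2 ≤ cubicExt F ε s := by
  obtain ⟨hε₀, hε₁⟩ := hε
  set A := |deriv F 0|
  have h0 : (0 : ℝ) ∈ Ioo (-1) 1 := by norm_num
  have hmono : MonotoneOn (deriv F) (Ioo (-1) 1) := hconv.monotoneOn_deriv hdiff
  have hval : ∀ a ∈ Ioo (-1 : ℝ) 1, F 0 - A ≤ F a := fun a ha => by
    have htangent := hconv.add_deriv_mul_sub_le h0 ha (hdiff 0 h0)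
    have hslope : |deriv F 0 * a| ≤ A := by
      rw [abs_mul]
      exact mul_le_of_le_one_right (abs_nonneg _) (abs_le.2 ⟨ha.1.le, ha.2.le⟩)
    linarith [neg_abs_le (deriv F 0 * a)]
  unfold cubicExt
  split_ifs with hright hleft
  · have ha : 1 - ε ∈ Ioo (-1 : ℝ) 1 := ⟨by linarith, by linarith⟩
    have hd : -A ≤ deriv F (1 - ε) :=
      (neg_abs_le _).trans (hmono h0 ha (by linarith))
    refine ⟨s - (1 - ε), by linarith, abs_le.2 ⟨by linarith, by linarith⟩, ?_⟩
    linarith [hval _ ha, half_cube_sub_le_cubic (abs_nonneg _) hd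
      (mul_nonneg one_half_pos.le (hF'' _ ha)) (sub_nonneg.2 hright)]
  · have ha : -1 + ε ∈ Ioo (-1 : ℝ) 1 := ⟨by linarith, by linarith⟩
    have hd : -A ≤ -deriv F (-1 + ε) :=
      neg_le_neg ((hmono ha h0 (by linarith)).trans (le_abs_self _))
    have habs : |s - (-1 + ε)| = -1 + ε - s := by rw [abs_of_nonpos (by linarith)]; ring
    refine ⟨-1 + ε - s, by linarith, abs_le.2 ⟨by linarith, by linarith⟩, ?_⟩
    have htail := half_cube_sub_le_cubic (abs_nonneg _) hd
      (mul_nonneg one_half_pos.le (hF'' _ ha)) (sub_nonneg.2 hleft)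
    rw [habs]
    linarith [hval _ ha]
  · have hs : s ∈ Ioo (-1 : ℝ) 1 := ⟨by linarith, by linarith⟩
    refine ⟨0, le_rfl, by simpa using abs_le.2 ⟨hs.1.le, hs.2.le⟩, ?_⟩
    nlinarith [hval s hs, abs_nonneg (deriv F 0)]

/-- If `F ∈ C²((-1,1))` with `F'' ≥ c₀ > 0`, then there are constants
`k₁ > 0` and `k₂ ≥ 0`, independent of `ε ∈ (0,1]`, such that
`F_ε(s) ≥ k₁|s|³ - k₂` for all `s ∈ ℝ`. -/
theorem cubicExt_cubic_growth (F : ℝ → ℝ) (c₀ : ℝ) (hc₀ : 0 < c₀)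
    (hF : ContDiffOn ℝ 2 F (Set.Ioo (-1) 1))
    (hF'' : ∀ s ∈ Set.Ioo (-1 : ℝ) 1, c₀ ≤ deriv (deriv F) s) :
    ∃ k₁ > (0 : ℝ), ∃ k₂ ≥ (0 : ℝ),
      ∀ ε ∈ Set.Ioc (0 : ℝ) 1, ∀ s : ℝ,
        k₁ * |s| ^ 3 - k₂ ≤ cubicExt F ε s := by
  have hdiffOn : DifferentiableOn ℝ F (Ioo (-1) 1) := hF.differentiableOn (by norm_num)
  have hdiff : ∀ x ∈ Ioo (-1 : ℝ) 1, DifferentiableAt ℝ F x := fun x hx =>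
    (hdiffOn x hx).differentiableAt (isOpen_Ioo.mem_nhds hx)
  have hF''₀ : ∀ x ∈ Ioo (-1 : ℝ) 1, 0 ≤ deriv (deriv F) x := fun x hx =>
    hc₀.le.trans (hF'' x hx)
  have hconv : ConvexOn ℝ (Ioo (-1) 1) F :=
    convexOn_of_deriv2_nonneg' (convex_Ioo _ _) hdiffOn
      ((hF.deriv_of_isOpen (m := 1) isOpen_Ioo (by norm_num)).differentiableOn (by norm_num)) hF''₀
  set A := |deriv F 0|
  refine ⟨1 / 8, by norm_num, |F 0| + 2 * A + A ^ 2 + 1 / 2, by positivity, fun ε hε s => ?_⟩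
  obtain ⟨t, ht, hs, hle⟩ := exists_le_cubicExt hconv hdiff hF''₀ hε s
  have hcube : |s| ^ 3 ≤ 4 * (1 + t ^ 3) :=
    calc |s| ^ 3 ≤ (1 + t) ^ 3 := pow_le_pow_left₀ (abs_nonneg s) hs 3
      _ ≤ 2 ^ (3 - 1) * (1 ^ 3 + t ^ 3) := add_pow_le zero_le_one ht 3
      _ = 4 * (1 + t ^ 3) := by norm_num
  linarith [neg_abs_le (F 0)]
end

section
/- Let p ≥ 2, q > p, and α ∈ (0,1). Fix k > 2 and ρ > k/α with ρ satisfying ρ > (q/(q-2))(k-2). Define β(k,ρ) = (p/q)·((q-2)ρ - q(k-2)) / (2(p-1)ρ - p(k-2)). Then the infimum of β over the region R = {(k,ρ) : k > 2, ρ > k/α} equals β* = (p/q)·((1-α)q - 2)/((2-α)p - 2), and this infimum is not attained. -/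
/-!
Clearing denominators, `β(k, ρ) - β*` has the sign of
`(p q + 2p - 2q) (α ρ - (k - 2))`, which is positive on `R` because `p ≥ 2` and `α ρ > k`;
so `β*` is a strict lower bound. On the line `k = α (ρ - 1)`, which lies in `R` for large `ρ`,
`β` is a ratio of affine functions of `ρ` whose leading coefficients are the numerator and
denominator of `β*`, so `β → β*` as `ρ → ∞`.
-/

open Filter Topology

noncomputable section

namespace BetaInfimum

def beta (p q k ρ : ℝ) : ℝ :=
  (p / q) * (((q - 2) * ρ - q * (k - 2)) / (2 * (p - 1) * ρ - p * (k - 2)))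

def betaStar (p q α : ℝ) : ℝ :=
  (p / q) * (((1 - α) * q - 2) / ((2 - α) * p - 2))

def betaValues (p q α : ℝ) : Set ℝ :=
  {x | ∃ k ρ : ℝ, 2 < k ∧ k / α < ρ ∧ x = beta p q k ρ}

lemma tendsto_affine_div_affine_atTop (a b c d : ℝ) (hc : c ≠ 0) :
    Tendsto (fun t => (a * t + b) / (c * t + d)) atTop (𝓝 (a / c)) := by
  have hlim : Tendsto (fun t : ℝ => (a + b * t⁻¹) / (c + d * t⁻¹)) atTop (𝓝 (a / c)) := by
    have hinv := tendsto_inv_atTop_zero (𝕜 := ℝ)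
    have hnum : Tendsto (fun t : ℝ => a + b * t⁻¹) atTop (𝓝 a) := by
      simpa using (hinv.const_mul b).const_add a
    have hden : Tendsto (fun t : ℝ => c + d * t⁻¹) atTop (𝓝 c) := by
      simpa using (hinv.const_mul d).const_add c
    exact hnum.div hden hc
  refine hlim.congr' ?_
  filter_upwards [eventually_ne_atTop 0] with t ht
  rw [← mul_div_mul_right _ _ ht]
  field_simp

lemma cross_difference (p q α k ρ : ℝ) :
    ((q - 2) * ρ - q * (k - 2)) * ((2 - α) * p - 2)
        - ((1 - α) * q - 2) * (2 * (p - 1) * ρ - p * (k - 2))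
      = (p * q + 2 * p - 2 * q) * (α * ρ - (k - 2)) := by
  ring

lemma betaStar_lt_beta {p q α k ρ : ℝ} (hp : 2 ≤ p) (hq : 0 < q) (hα₀ : 0 < α) (hα₁ : α < 1)
    (hk : 0 ≤ k) (hkρ : k < α * ρ) : betaStar p q α < beta p q k ρ := by
  have hρ : 0 < ρ := pos_of_mul_pos_right (hk.trans_lt hkρ) hα₀.le
  have hkρ' : k < ρ := by nlinarith
  have hden : 0 < 2 * (p - 1) * ρ - p * (k - 2) := by
    nlinarith [mul_nonneg (by linarith : (0 : ℝ) ≤ p - 2) hρ.le]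
  have hden' : 0 < (2 - α) * p - 2 := by nlinarith
  have hcoeff : 0 < p * q + 2 * p - 2 * q := by nlinarith
  unfold beta betaStar
  gcongr ?_ * ?_
  rw [div_lt_div_iff₀ hden' hden, ← sub_pos, cross_difference]
  exact mul_pos hcoeff (by linarith)

lemma tendsto_beta_along_line (p q α : ℝ) (h : (2 - α) * p - 2 ≠ 0) :
    Tendsto (fun ρ => beta p q (α * (ρ - 1)) ρ) atTop (𝓝 (betaStar p q α)) := by
  have hform : (fun ρ => beta p q (α * (ρ - 1)) ρ) = fun ρ => (p / q) *
      ((((1 - α) * q - 2) * ρ + q * (α + 2)) / (((2 - α) * p - 2) * ρ + p * (α + 2))) := by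
    funext ρ
    unfold beta
    ring_nf
  rw [hform]
  exact (tendsto_affine_div_affine_atTop _ _ _ _ h).const_mul _

lemma beta_line_mem_betaValues {p q α ρ : ℝ} (hα : 0 < α) (hρ : 2 / α + 1 < ρ) :
    beta p q (α * (ρ - 1)) ρ ∈ betaValues p q α := by
  refine ⟨α * (ρ - 1), ρ, ?_, ?_, rfl⟩
  · have := (div_lt_iff₀' hα).mp (by linarith : 2 / α < ρ - 1)
    linarith
  · rw [mul_div_cancel_left₀ _ hα.ne']
    linarith

end BetaInfimum

open BetaInfimum in
theorem beta_infimum_2d_general (p q α : ℝ) (hp : 2 ≤ p) (hq : p < q)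
    (hα : α ∈ Set.Ioo (0 : ℝ) 1) :
    IsGLB {x : ℝ | ∃ k ρ : ℝ, 2 < k ∧ k / α < ρ ∧
        x = (p / q) * (((q - 2) * ρ - q * (k - 2)) / (2 * (p - 1) * ρ - p * (k - 2)))}
      ((p / q) * (((1 - α) * q - 2) / ((2 - α) * p - 2))) ∧
    (p / q) * (((1 - α) * q - 2) / ((2 - α) * p - 2)) ∉
      {x : ℝ | ∃ k ρ : ℝ, 2 < k ∧ k / α < ρ ∧
        x = (p / q) * (((q - 2) * ρ - q * (k - 2)) / (2 * (p - 1) * ρ - p * (k - 2)))} := by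
  obtain ⟨hα₀, hα₁⟩ := hα
  show IsGLB (betaValues p q α) (betaStar p q α) ∧ betaStar p q α ∉ betaValues p q α
  have hlt : ∀ x ∈ betaValues p q α, betaStar p q α < x := by
    rintro x ⟨k, ρ, hk, hkρ, rfl⟩
    exact betaStar_lt_beta hp (by linarith) hα₀ hα₁ (by linarith) ((div_lt_iff₀' hα₀).mp hkρ)
  have hclosure : betaStar p q α ∈ closure (betaValues p q α) := by
    refine mem_closure_of_tendsto (tendsto_beta_along_line p q α (by nlinarith)) ?_
    filter_upwards [eventually_gt_atTop (2 / α + 1)] with ρ hρ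
    exact beta_line_mem_betaValues hα₀ hρ
  exact ⟨isGLB_of_mem_closure (fun x hx => (hlt x hx).le) hclosure,
    fun hmem => (hlt _ hmem).false⟩

/-- two-dimensional exponent optimization. For `p ≥ 2`, `q > p`
(with `q > 2p` as assumed in the construction `q = p(1+p/ε)`, `ε < p`) and `α ∈ (0,1)`,
the infimum of `β(k,ρ) = (p/q)·((q-2)ρ - q(k-2)) / (2(p-1)ρ - p(k-2))` over the region
`R = {(k,ρ) : k > 2, ρ > k/α}` equals `β* = (p/q)·((1-α)q - 2)/((2-α)p - 2)`, and
this infimum is not attained. -/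
theorem beta_infimum_2d (p q α : ℝ) (hp : 2 ≤ p) (hq : p < q) (hq2 : 2 * p < q)
    (hα : α ∈ Set.Ioo (0 : ℝ) 1) :
    IsGLB {x : ℝ | ∃ k ρ : ℝ, 2 < k ∧ k / α < ρ ∧
        x = (p / q) * (((q - 2) * ρ - q * (k - 2)) / (2 * (p - 1) * ρ - p * (k - 2)))}
      ((p / q) * (((1 - α) * q - 2) / ((2 - α) * p - 2))) ∧
    (p / q) * (((1 - α) * q - 2) / ((2 - α) * p - 2)) ∉
      {x : ℝ | ∃ k ρ : ℝ, 2 < k ∧ k / α < ρ ∧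
        x = (p / q) * (((q - 2) * ρ - q * (k - 2)) / (2 * (p - 1) * ρ - p * (k - 2)))} :=
  beta_infimum_2d_general p q α hp hq hα
end
end
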